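/- arXiv:1807.09067 — 6 statements merged into one kernel-verified Lean document; each statement's English description precedes it below -/
import Mathlib

section
/- Let (ω_n)_{n≥0} be i.i.d. random variables with values in a measurable space E, let g : E → (0,∞) be measurable and set V_n = g(ω_n). Fix t ≥ 0, integers 1 ≤ k ≤ ℓ, and let A_ℓ = {V_0 + ⋯ + V_{ℓ−1} ≤ t < V_0 + ⋯ + V_ℓ}. Then for every measurable φ : E^k → [0,∞], E[φ(ω_0, …, ω_{k−1}) · 1_{A_ℓ}] = E[φ(ω_{ℓ−1}, …, ω_{ℓ−k}) · 1_{A_ℓ}]. -/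
/-!
The vector `(ω 0, …, ω ℓ)` of i.i.d. variables has a product law, so its law is invariant under
permutations of the coordinates. Reversing the first `ℓ` coordinates while fixing the last one
leaves both partial sums `V 0 + ⋯ + V (ℓ-1)` and `V 0 + ⋯ + V ℓ`, hence the event `A_ℓ`,
unchanged, and carries `(ω 0, …, ω (k-1))` to `(ω (ℓ-1), …, ω (ℓ-k))`.
-/

open MeasureTheory ProbabilityTheory
open scoped ENNReal NNReal

namespace Fin

/-- Reverses the first `n` entries of `Fin (n + 1)` and fixes `Fin.last n`. -/
def revInitPerm (n : ℕ) : Equiv.Perm (Fin (n + 1)) :=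
  finSumFinEquiv.permCongr (revPerm.sumCongr (Equiv.refl (Fin 1)))

@[simp]
theorem revInitPerm_castSucc {n : ℕ} (i : Fin n) :
    revInitPerm n i.castSucc = i.rev.castSucc := by
  simp [revInitPerm, finSumFinEquiv_symm_apply_castSucc]
  rfl

theorem val_revInitPerm_castSucc {n : ℕ} (i : Fin n) :
    (revInitPerm n i.castSucc : ℕ) = n - 1 - i := by
  rw [revInitPerm_castSucc, val_castSucc, val_rev]
  omega

theorem sum_revInitPerm_castSucc {M : Type*} [AddCommMonoid M] {n : ℕ} (f : Fin (n + 1) → M) :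
    ∑ i : Fin n, f (revInitPerm n i.castSucc) = ∑ i : Fin n, f i.castSucc := by
  simpa using Equiv.sum_comp revPerm fun i : Fin n => f i.castSucc

end Fin

section

variable {Ω E : Type*} [MeasurableSpace Ω] [MeasurableSpace E] {μ : Measure Ω}

namespace ProbabilityTheory.iIndepFun

variable {ι κ : Type*} [Fintype ι] {ω : κ → Ω → E} {ν : Measure E}

theorem map_comp_eq_pi (hω : ∀ n, AEMeasurable (ω n) μ) (hindep : iIndepFun ω μ)
    (hident : ∀ n, μ.map (ω n) = ν) {f : ι → κ} (hf : f.Injective) :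
    μ.map (fun x j => ω (f j) x) = Measure.pi fun _ => ν := by
  rw [(hindep.precomp hf).map_fun_eq_pi_map fun j => hω (f j)]
  simp only [hident]

theorem map_comp_eq_map_comp (hω : ∀ n, AEMeasurable (ω n) μ) (hindep : iIndepFun ω μ)
    (hident : ∀ n, μ.map (ω n) = ν) {f f' : ι → κ} (hf : f.Injective) (hf' : f'.Injective) :
    μ.map (fun x j => ω (f j) x) = μ.map (fun x j => ω (f' j) x) := by
  rw [hindep.map_comp_eq_pi hω hident hf, hindep.map_comp_eq_pi hω hident hf']

end ProbabilityTheory.iIndepFun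

theorem setLIntegral_preimage_eq_of_map_eq {F : Type*} [MeasurableSpace F] {X Y : Ω → F}
    (hX : Measurable X) (hY : Measurable Y) (hXY : μ.map X = μ.map Y) {S : Set F}
    (hS : MeasurableSet S) {u : F → ℝ≥0∞} (hu : Measurable u) :
    ∫⁻ x in X ⁻¹' S, u (X x) ∂μ = ∫⁻ x in Y ⁻¹' S, u (Y x) ∂μ := by
  rw [← setLIntegral_map hS hu hX, ← setLIntegral_map hS hu hY, hXY]

end

theorem exchangeability_identity_fixed_level_general
    {Ω E : Type*} [MeasurableSpace Ω] [MeasurableSpace E]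
    (μ : Measure Ω)
    (ω : ℕ → Ω → E) (hmeas : ∀ n, Measurable (ω n))
    (hindep : iIndepFun ω μ)
    (hident : ∀ n, Measure.map (ω n) μ = Measure.map (ω 0) μ)
    (g : E → ℝ) (hg : Measurable g)
    (t : ℝ) (k ℓ : ℕ) (hkl : k ≤ ℓ)
    (φ : (Fin k → E) → ℝ≥0∞) (hφ : Measurable φ) :
    ∫⁻ x in {x | (∑ i ∈ Finset.range ℓ, g (ω i x)) ≤ t ∧
        t < ∑ i ∈ Finset.range (ℓ + 1), g (ω i x)},
      φ (fun i => ω (i : ℕ) x) ∂μ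
      = ∫⁻ x in {x | (∑ i ∈ Finset.range ℓ, g (ω i x)) ≤ t ∧
          t < ∑ i ∈ Finset.range (ℓ + 1), g (ω i x)},
        φ (fun i => ω (ℓ - 1 - (i : ℕ)) x) ∂μ := by
  let σ := Fin.revInitPerm ℓ
  let X : Ω → Fin (ℓ + 1) → E := fun x j => ω j x
  let Y : Ω → Fin (ℓ + 1) → E := fun x j => ω (σ j) x
  let S : Set (Fin (ℓ + 1) → E) := {y | ∑ i : Fin ℓ, g (y i.castSucc) ≤ t ∧ t < ∑ i, g (y i)}
  let u : (Fin (ℓ + 1) → E) → ℝ≥0∞ := fun y => φ fun i => y (i.castLE hkl).castSucc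
  have hX : Measurable X := measurable_pi_lambda _ fun j => hmeas j
  have hY : Measurable Y := measurable_pi_lambda _ fun j => hmeas (σ j)
  have hS : MeasurableSet S :=
    (measurableSet_le (Finset.measurable_sum _ fun i _ => hg.comp (measurable_pi_apply _))
      measurable_const).inter
      (measurableSet_lt measurable_const
        (Finset.measurable_sum _ fun i _ => hg.comp (measurable_pi_apply _)))
  have hu : Measurable u := hφ.comp (measurable_pi_lambda _ fun i => measurable_pi_apply _)
  have hXY : μ.map X = μ.map Y :=
    hindep.map_comp_eq_map_comp (fun n => (hmeas n).aemeasurable) hident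
      Fin.val_injective (Fin.val_injective.comp σ.injective)
  have hAX : {x | (∑ i ∈ Finset.range ℓ, g (ω i x)) ≤ t ∧
      t < ∑ i ∈ Finset.range (ℓ + 1), g (ω i x)} = X ⁻¹' S := by
    ext x
    simp [X, S, Fin.sum_univ_eq_sum_range (fun n => g (ω n x))]
  have hAY : X ⁻¹' S = Y ⁻¹' S := by
    ext x
    have hinit : ∑ i : Fin ℓ, g (ω (σ i.castSucc) x) = ∑ i : Fin ℓ, g (ω i.castSucc x) :=
      Fin.sum_revInitPerm_castSucc fun j => g (ω j x)
    simp only [Set.mem_preimage, Set.mem_ofPred_eq, X, Y, S, hinit,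
      Equiv.sum_comp σ fun j => g (ω j x)]
  have huY (x : Ω) : u (Y x) = φ fun i => ω (ℓ - 1 - (i : ℕ)) x := by
    simp only [u, Y, σ, Fin.val_revInitPerm_castSucc, Fin.val_castLE]
  calc _ = ∫⁻ x in X ⁻¹' S, u (X x) ∂μ := by rw [hAX]; rfl
    _ = ∫⁻ x in Y ⁻¹' S, u (Y x) ∂μ := setLIntegral_preimage_eq_of_map_eq hX hY hXY hS hu
    _ = _ := by simp_rw [← hAY, ← hAX, huY]

/-- **Exchangeability identity** (Statement 0).
Let `(ω n)` be i.i.d. `E`-valued random variables, `g : E → (0,∞)` measurable,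
`V n = g (ω n)`. Fix `t ≥ 0` and `1 ≤ k ≤ ℓ`, and consider the event
`A_ℓ = {V 0 + ⋯ + V (ℓ-1) ≤ t < V 0 + ⋯ + V ℓ}`.  Then for every measurable
`φ : E^k → [0,∞]`,
`E[φ(ω 0, …, ω (k-1)) 1_{A_ℓ}] = E[φ(ω (ℓ-1), …, ω (ℓ-k)) 1_{A_ℓ}]`. -/
theorem exchangeability_identity_fixed_level
    {Ω E : Type*} [MeasurableSpace Ω] [MeasurableSpace E]
    (μ : Measure Ω) [IsProbabilityMeasure μ]
    (ω : ℕ → Ω → E) (hmeas : ∀ n, Measurable (ω n))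
    (hindep : iIndepFun ω μ)
    (hident : ∀ n, Measure.map (ω n) μ = Measure.map (ω 0) μ)
    (g : E → ℝ) (hg : Measurable g) (hgpos : ∀ e, 0 < g e)
    (t : ℝ) (ht : 0 ≤ t) (k ℓ : ℕ) (hk : 1 ≤ k) (hkl : k ≤ ℓ)
    (φ : (Fin k → E) → ℝ≥0∞) (hφ : Measurable φ) :
    ∫⁻ x in {x | (∑ i ∈ Finset.range ℓ, g (ω i x)) ≤ t ∧
        t < ∑ i ∈ Finset.range (ℓ + 1), g (ω i x)},
      φ (fun i => ω (i : ℕ) x) ∂μ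
      = ∫⁻ x in {x | (∑ i ∈ Finset.range ℓ, g (ω i x)) ≤ t ∧
          t < ∑ i ∈ Finset.range (ℓ + 1), g (ω i x)},
        φ (fun i => ω (ℓ - 1 - (i : ℕ)) x) ∂μ :=
  exchangeability_identity_fixed_level_general μ ω hmeas hindep hident g hg t k ℓ hkl φ hφ
end

section
/- Let (ω_n)_{n≥0} be i.i.d. random variables with values in a measurable space E, let g : E → (0,∞) be measurable and set V_n = g(ω_n). Fix t ≥ 0 and let N = min{n ≥ 0 : V_0 + ⋯ + V_n > t} (which is almost surely finite). Then for every integer k ≥ 1 and every measurable φ : E^k → [0,∞], E[φ(ω_{N−1}, …, ω_{N−k}) · 1_{N ≥ k}] = E[φ(ω_0, …, ω_{k−1}) · 1_{N ≥ k}]; equivalently, conditionally on the event {N ≥ k}, the reversed vector (ω_{N−1}, …, ω_{N−k}) has the same law as (ω_0, …, ω_{k−1}). -/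
/-!
For `m ≥ 1`, positivity of `g` turns `{N = m}` into `{V₀ + ⋯ + V_{m-1} ≤ t < V₀ + ⋯ + V_m}`, an
event invariant under reversing `ω₀, …, ω_{m-1}`. The law of an i.i.d. sequence is a product
measure, hence invariant under any permutation of the indices, and this reversal sends
`(ω_{m-1}, …, ω_{m-k})` to `(ω₀, …, ω_{k-1})`. Summing over `m ≥ k` gives the identity.
-/

open MeasureTheory ProbabilityTheory Finset
open scoped ENNReal

/-- Since `sInf ∅ = 0`, this is `0` (not `∞`) when the partial sums never exceed `t`. -/
noncomputable def firstPassageTime (t : ℝ) (s : ℕ → ℝ) : ℕ :=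
  sInf {n | t < ∑ i ∈ range (n + 1), s i}

theorem firstPassageTime_eq_succ_iff {t : ℝ} {s : ℕ → ℝ} (hs : ∀ i, 0 ≤ s i) (m : ℕ) :
    firstPassageTime t s = m + 1 ↔
      ∑ i ∈ range (m + 1), s i ≤ t ∧ t < ∑ i ∈ range (m + 2), s i := by
  rw [firstPassageTime, Nat.sInf_upward_closed_eq_succ_iff]
  · simp only [Set.mem_ofPred_eq, not_lt, and_comm]
  · intro a b hab ha
    exact ha.trans_le <| sum_le_sum_of_subset_of_nonneg (range_subset_range.2 (by omega))
      fun i _ _ ↦ hs i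

theorem measurableSet_firstPassageTime_eq {α : Type*} [MeasurableSpace α] {s : ℕ → α → ℝ}
    (hs : ∀ i, Measurable (s i)) (hs0 : ∀ i x, 0 ≤ s i x) (t : ℝ) {m : ℕ} (hm : m ≠ 0) :
    MeasurableSet {x | firstPassageTime t (fun i ↦ s i x) = m} := by
  obtain ⟨m, rfl⟩ := Nat.exists_eq_succ_of_ne_zero hm
  simp_rw [firstPassageTime_eq_succ_iff (hs0 · _)]
  exact (measurableSet_le (Finset.measurable_sum _ fun i _ ↦ hs i) measurable_const).inter
    (measurableSet_lt measurable_const (Finset.measurable_sum _ fun i _ ↦ hs i))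

def prefixReversal (m : ℕ) : Equiv.Perm ℕ :=
  (Fin.revPerm : Equiv.Perm (Fin m)).extendDomain Fin.equivSubtype

theorem prefixReversal_apply_of_lt {m i : ℕ} (h : i < m) : prefixReversal m i = m - 1 - i := by
  rw [prefixReversal, Equiv.Perm.extendDomain_apply_subtype _ _ (p := (· < m)) h]
  simp [Fin.equivSubtype]
  omega

theorem prefixReversal_apply_of_le {m i : ℕ} (h : m ≤ i) : prefixReversal m i = i :=
  Equiv.Perm.extendDomain_apply_not_subtype _ _ (not_lt.2 h)

theorem sum_range_comp_prefixReversal {M : Type*} [AddCommMonoid M] (f : ℕ → M) {m n : ℕ}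
    (hmn : m ≤ n) : ∑ i ∈ range n, f (prefixReversal m i) = ∑ i ∈ range n, f i :=
  Equiv.Perm.sum_comp _ _ _ fun i hi ↦
    mem_range.2 <| by_contra fun hin ↦ hi <| prefixReversal_apply_of_le (by omega)

theorem firstPassageTime_comp_prefixReversal_eq_iff {t : ℝ} {s : ℕ → ℝ} (hs : ∀ i, 0 ≤ s i)
    (m : ℕ) : firstPassageTime t (s ∘ prefixReversal m) = m ↔ firstPassageTime t s = m := by
  cases m with
  | zero =>
    rw [show s ∘ prefixReversal 0 = s from funext fun i ↦ by
      simp [prefixReversal_apply_of_le (Nat.zero_le i)]]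
  | succ m =>
    rw [firstPassageTime_eq_succ_iff (s := s ∘ prefixReversal (m + 1)) fun i ↦ hs _,
      firstPassageTime_eq_succ_iff hs]
    simp only [Function.comp_apply, sum_range_comp_prefixReversal s le_rfl,
      sum_range_comp_prefixReversal s (Nat.le_succ _)]

namespace ProbabilityTheory

section Exchangeability

variable {ι Ω E : Type*} [MeasurableSpace Ω] [MeasurableSpace E] {μ : Measure Ω}
  {ν : Measure E} {ω : ι → Ω → E}

theorem iIndepFun.map_fun_eq_infinitePi_of_identDistrib (hmeas : ∀ i, Measurable (ω i))
    (hindep : iIndepFun ω μ) (hident : ∀ i, μ.map (ω i) = ν) :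
    μ.map (fun x i ↦ ω i x) = Measure.infinitePi fun _ : ι ↦ ν := by
  simp_rw [hindep.map_fun_eq_infinitePi_map hmeas, hident]

theorem measurePreserving_comp_perm_infinitePi [IsProbabilityMeasure ν] (σ : Equiv.Perm ι) :
    MeasurePreserving (fun w : ι → E ↦ w ∘ σ) (Measure.infinitePi fun _ ↦ ν)
      (Measure.infinitePi fun _ ↦ ν) := by
  have h := Measure.infinitePi_map_piCongrLeft (fun _ : ι ↦ ν) σ.symm
  have hσ : ⇑(MeasurableEquiv.piCongrLeft (fun _ : ι ↦ E) σ.symm) = fun w ↦ w ∘ σ := by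
    ext w i
    simp [MeasurableEquiv.coe_piCongrLeft, Equiv.piCongrLeft_apply, eq_rec_constant]
  rw [hσ] at h
  exact ⟨by fun_prop, h⟩

theorem iIndepFun.setLIntegral_comp_perm [IsProbabilityMeasure ν]
    (hmeas : ∀ i, Measurable (ω i)) (hindep : iIndepFun ω μ) (hident : ∀ i, μ.map (ω i) = ν)
    (σ : Equiv.Perm ι)
    {B : Set (ι → E)} (hB : MeasurableSet B) (hBσ : (· ∘ σ) ⁻¹' B = B)
    {G : (ι → E) → ℝ≥0∞} (hG : Measurable G) :
    ∫⁻ x in (fun x i ↦ ω i x) ⁻¹' B, G (fun i ↦ ω (σ i) x) ∂μ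
      = ∫⁻ x in (fun x i ↦ ω i x) ⁻¹' B, G (fun i ↦ ω i x) ∂μ := by
  have hX : Measurable fun x i ↦ ω i x := measurable_pi_lambda _ hmeas
  have hσ := measurePreserving_comp_perm_infinitePi (ν := ν) σ
  calc ∫⁻ x in (fun x i ↦ ω i x) ⁻¹' B, G (fun i ↦ ω (σ i) x) ∂μ
      = ∫⁻ w in B, G (w ∘ σ) ∂μ.map (fun x i ↦ ω i x) :=
        (setLIntegral_map hB (hG.comp hσ.measurable) hX).symm
    _ = ∫⁻ w in B, G w ∂μ.map (fun x i ↦ ω i x) := by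
        rw [hindep.map_fun_eq_infinitePi_of_identDistrib hmeas hident]
        conv_lhs => rw [← hBσ]
        exact hσ.setLIntegral_comp_preimage hB hG
    _ = ∫⁻ x in (fun x i ↦ ω i x) ⁻¹' B, G (fun i ↦ ω i x) ∂μ := setLIntegral_map hB hG hX

end Exchangeability

theorem iIndepFun.setLIntegral_firstPassageTime_eq_reverse
    {Ω E : Type*} [MeasurableSpace Ω] [MeasurableSpace E] {μ : Measure Ω}
    {ν : Measure E} [IsProbabilityMeasure ν] {ω : ℕ → Ω → E}
    (hmeas : ∀ n, Measurable (ω n)) (hindep : iIndepFun ω μ) (hident : ∀ n, μ.map (ω n) = ν)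
    {g : E → ℝ} (hg : Measurable g) (hg0 : ∀ e, 0 ≤ g e) (t : ℝ) {k m : ℕ} (hm : m ≠ 0)
    (hkm : k ≤ m) {φ : (Fin k → E) → ℝ≥0∞} (hφ : Measurable φ) :
    ∫⁻ x in {x | firstPassageTime t (fun i ↦ g (ω i x)) = m}, φ (fun i ↦ ω (m - 1 - i) x) ∂μ
      = ∫⁻ x in {x | firstPassageTime t (fun i ↦ g (ω i x)) = m}, φ (fun i ↦ ω i x) ∂μ := by
  have hB : MeasurableSet {w : ℕ → E | firstPassageTime t (fun i ↦ g (w i)) = m} :=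
    measurableSet_firstPassageTime_eq (fun i ↦ hg.comp (measurable_pi_apply i))
      (fun _ _ ↦ hg0 _) t hm
  have hBσ : (· ∘ prefixReversal m) ⁻¹'
      {w : ℕ → E | firstPassageTime t (fun i ↦ g (w i)) = m}
      = {w | firstPassageTime t (fun i ↦ g (w i)) = m} :=
    Set.ext fun w ↦ firstPassageTime_comp_prefixReversal_eq_iff (fun i ↦ hg0 (w i)) m
  refine (setLIntegral_congr_fun (hB.preimage (measurable_pi_lambda _ hmeas)) fun x _ ↦ ?_).trans
    (hindep.setLIntegral_comp_perm hmeas hident (prefixReversal m) hB hBσ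
      (G := fun w ↦ φ fun i ↦ w i) (by fun_prop))
  congr 1
  funext i
  dsimp only
  rw [prefixReversal_apply_of_lt (by omega)]

end ProbabilityTheory

theorem exchangeability_identity_first_passage_general
    {Ω E : Type*} [MeasurableSpace Ω] [MeasurableSpace E]
    (μ : Measure Ω) [IsProbabilityMeasure μ]
    (ω : ℕ → Ω → E) (hmeas : ∀ n, Measurable (ω n))
    (hindep : iIndepFun ω μ)
    (hident : ∀ n, Measure.map (ω n) μ = Measure.map (ω 0) μ)
    (g : E → ℝ) (hg : Measurable g) (hgpos : ∀ e, 0 < g e)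
    (t : ℝ) (k : ℕ) (hk : 1 ≤ k)
    (N : Ω → ℕ)
    (hN : ∀ x, N x = sInf {n : ℕ | t < ∑ i ∈ Finset.range (n + 1), g (ω i x)})
    (φ : (Fin k → E) → ℝ≥0∞) (hφ : Measurable φ) :
    ∫⁻ x in {x | k ≤ N x}, φ (fun i => ω (N x - 1 - (i : ℕ)) x) ∂μ
      = ∫⁻ x in {x | k ≤ N x}, φ (fun i => ω (i : ℕ) x) ∂μ := by
  obtain rfl : N = fun x ↦ firstPassageTime t (fun i ↦ g (ω i x)) := funext hN
  beta_reduce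
  have := Measure.isProbabilityMeasure_map (μ := μ) (hmeas 0).aemeasurable
  have hlevel : ∀ n, MeasurableSet {x | firstPassageTime t (fun i ↦ g (ω i x)) = n + k} :=
    fun n ↦ measurableSet_firstPassageTime_eq (fun i ↦ hg.comp (hmeas i))
      (fun _ _ ↦ (hgpos _).le) t (by omega)
  have hdisj := (pairwise_disjoint_fiber fun x ↦
    firstPassageTime t (fun i ↦ g (ω i x))).comp_of_injective (add_left_injective k)
  have hunion : {x | k ≤ firstPassageTime t (fun i ↦ g (ω i x))}
      = ⋃ n, {x | firstPassageTime t (fun i ↦ g (ω i x)) = n + k} := by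
    ext x
    simp only [Set.mem_ofPred_eq, Set.mem_iUnion]
    exact ⟨fun h ↦ ⟨_, (Nat.sub_add_cancel h).symm⟩, fun ⟨n, hn⟩ ↦ hn ▸ Nat.le_add_left k n⟩
  rw [hunion, lintegral_iUnion hlevel hdisj, lintegral_iUnion hlevel hdisj]
  refine tsum_congr fun n ↦ ?_
  rw [setLIntegral_congr_fun (hlevel n) fun x (hx : _ = n + k) ↦ by rw [hx]]
  exact hindep.setLIntegral_firstPassageTime_eq_reverse hmeas hident hg (fun e ↦ (hgpos e).le) t
    (by omega) (by omega) hφ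

/-- **Exchangeability identity at the first-passage level** (Statement 1).
Let `(ω n)` be i.i.d. `E`-valued random variables, `g : E → (0,∞)` measurable,
`V n = g (ω n)`, and let `N = min {n : V 0 + ⋯ + V n > t}` be the first time the
partial sums exceed `t`.  Then for every `k ≥ 1` and every measurable
`φ : E^k → [0,∞]`,
`E[φ(ω (N-1), …, ω (N-k)) 1_{N ≥ k}] = E[φ(ω 0, …, ω (k-1)) 1_{N ≥ k}]`. -/
theorem exchangeability_identity_first_passage
    {Ω E : Type*} [MeasurableSpace Ω] [MeasurableSpace E]
    (μ : Measure Ω) [IsProbabilityMeasure μ]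
    (ω : ℕ → Ω → E) (hmeas : ∀ n, Measurable (ω n))
    (hindep : iIndepFun ω μ)
    (hident : ∀ n, Measure.map (ω n) μ = Measure.map (ω 0) μ)
    (g : E → ℝ) (hg : Measurable g) (hgpos : ∀ e, 0 < g e)
    (t : ℝ) (ht : 0 ≤ t) (k : ℕ) (hk : 1 ≤ k)
    (N : Ω → ℕ)
    (hN : ∀ x, N x = sInf {n : ℕ | t < ∑ i ∈ Finset.range (n + 1), g (ω i x)})
    (φ : (Fin k → E) → ℝ≥0∞) (hφ : Measurable φ) :
    ∫⁻ x in {x | k ≤ N x}, φ (fun i => ω (N x - 1 - (i : ℕ)) x) ∂μ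
      = ∫⁻ x in {x | k ≤ N x}, φ (fun i => ω (i : ℕ) x) ∂μ :=
  exchangeability_identity_first_passage_general μ ω hmeas hindep hident g hg hgpos t k hk N hN φ hφ
end

section
/- Let ζ_p ∈ (0,∞) for p ∈ ℕ with ζ_p → ζ ∈ (0,∞), and for each p let f_p : [0, ζ_p) → ℝ be nondecreasing; let f : [0, ζ) → ℝ be nondecreasing. Write M_p = sup_{0≤x<ζ_p} f_p(x) ∈ ℝ ∪ {+∞} and M = sup_{0≤x<ζ} f(x). Assume: (i) f_p(c) → f(c) for every c ∈ [0, ζ) at which f is continuous; and (ii) lim_{c↑ζ} limsup_{p→∞} (M_p − f_p(c)) = 0. Then M < +∞ and M_p → M. -/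
/-!
Since `f∞` is monotone, its continuity points are dense (a monotone function has only countably
many discontinuities). Comparing at a continuity point `c ≥ x` gives `f∞ x ≤ f∞ c = lim f p c ≤
liminf M p`, hence `M∞ ≤ liminf M p`. Conversely `M p = (M p - f p c) + f p c`, so at continuity
points `c` close to `ζ∞`, hypothesis (ii) gives `limsup M p ≤ ε + f∞ c ≤ ε + M∞`; taking `ε = 1`
also shows that `M∞ ≤ limsup M p` is finite.
-/

open Filter Set
open scoped Topology

lemma EReal.le_of_forall_pos_le_add {x y : EReal} (h : ∀ ε : ℝ, 0 < ε → x ≤ y + ε) : x ≤ y := by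
  induction y using EReal.rec with
  | bot => simpa using h 1 one_pos
  | top => exact le_top
  | coe y =>
    refine EReal.le_of_forall_lt_iff_le.1 fun z hz => ?_
    have hyz : y < z := EReal.coe_lt_coe_iff.1 hz
    have hle := h (z - y) (by linarith)
    rwa [← EReal.coe_add, add_sub_cancel] at hle

lemma EReal.limsup_le_limsup_sub_add {ι : Type*} {l : Filter ι} [l.NeBot] {u : ι → EReal}
    {v : ι → ℝ} {a : ℝ} (hv : Tendsto v l (𝓝 a)) :
    limsup u l ≤ limsup (fun i => u i - v i) l + a := by
  have hlim : limsup (fun i => (v i : EReal)) l = a := (EReal.tendsto_coe.2 hv).limsup_eq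
  calc limsup u l = limsup ((fun i => u i - v i) + fun i => (v i : EReal)) l := by
        simp only [Pi.add_def, EReal.sub_add_cancel]
    _ ≤ limsup (fun i => u i - v i) l + limsup (fun i => (v i : EReal)) l :=
        EReal.limsup_add_le (.inr (by simp [hlim])) (.inr (by simp [hlim]))
    _ = limsup (fun i => u i - v i) l + a := by rw [hlim]

section MonotoneContinuityPoints

variable {β : Type*} [LinearOrder β] [TopologicalSpace β] [OrderTopology β]
  [SecondCountableTopology β] {f : ℝ → β} {s : Set ℝ}

lemma MonotoneOn.exists_mem_Ioo_continuousWithinAt (hf : MonotoneOn f s) {a b : ℝ}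
    (hab : a < b) (hs : Ioo a b ⊆ s) : ∃ c ∈ Ioo a b, ContinuousWithinAt f s c := by
  obtain ⟨c, hc, hcont⟩ := (hf.countable_not_continuousWithinAt.dense_compl ℝ).inter_open_nonempty
    _ isOpen_Ioo (nonempty_Ioo.2 hab)
  exact ⟨c, hc, by_contra fun h => hcont ⟨hs hc, h⟩⟩

lemma MonotoneOn.frequently_continuousWithinAt_nhdsLT {a b : ℝ} (hf : MonotoneOn f (Ico a b))
    (hab : a < b) : ∃ᶠ c in 𝓝[<] b, c ∈ Ico a b ∧ ContinuousWithinAt f (Ico a b) c := by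
  refine frequently_iff.2 fun hU => ?_
  obtain ⟨l, hl, hlU⟩ := mem_nhdsLT_iff_exists_Ioo_subset.1 hU
  obtain ⟨c, hc, hcont⟩ := hf.exists_mem_Ioo_continuousWithinAt (max_lt hl hab)
    fun x hx => ⟨(le_max_right l a).trans hx.1.le, hx.2⟩
  exact ⟨c, hlU ⟨(le_max_left l a).trans_lt hc.1, hc.2⟩,
    ⟨(le_max_right l a).trans hc.1.le, hc.2⟩, hcont⟩

end MonotoneContinuityPoints

/-- The terminal value `f(ζ-)` of a path killed at time `ζ`, computed as a supremum so that it
makes sense (possibly `⊤`) without assuming the path monotone. -/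
noncomputable def terminalValue (ζ : ℝ) (f : ℝ → ℝ) : EReal := ⨆ x ∈ Ico (0 : ℝ) ζ, (f x : EReal)

lemma le_terminalValue {ζ x : ℝ} (f : ℝ → ℝ) (hx : x ∈ Ico 0 ζ) :
    (f x : EReal) ≤ terminalValue ζ f :=
  le_iSup₂ (f := fun x _ => (f x : EReal)) x hx

section KilledPaths

variable {ι : Type*} {l : Filter ι} [l.NeBot] {ζ : ι → ℝ} {ζ' : ℝ} {f : ι → ℝ → ℝ} {f' : ℝ → ℝ}

lemma terminalValue_le_liminf (hζ : Tendsto ζ l (𝓝 ζ')) (hmono' : MonotoneOn f' (Ico 0 ζ'))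
    (hpt : ∀ c ∈ Ico (0 : ℝ) ζ', ContinuousWithinAt f' (Ico 0 ζ') c →
      Tendsto (fun p => f p c) l (𝓝 (f' c))) :
    terminalValue ζ' f' ≤ liminf (fun p => terminalValue (ζ p) (f p)) l := by
  refine iSup₂_le fun x hx => ?_
  obtain ⟨c, hc, hcont⟩ := hmono'.exists_mem_Ioo_continuousWithinAt hx.2
    fun y hy => ⟨hx.1.trans hy.1.le, hy.2⟩
  have hc' : c ∈ Ico 0 ζ' := ⟨hx.1.trans hc.1.le, hc.2⟩
  calc (f' x : EReal) ≤ f' c := EReal.coe_le_coe_iff.2 (hmono' hx hc' hc.1.le)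
    _ = liminf (fun p => (f p c : EReal)) l :=
        (EReal.tendsto_coe.2 (hpt c hc' hcont)).liminf_eq.symm
    _ ≤ liminf (fun p => terminalValue (ζ p) (f p)) l := by
        refine liminf_le_liminf ?_
        filter_upwards [hζ.eventually (eventually_gt_nhds hc.2)] with p hp
        exact le_terminalValue (f p) ⟨hc'.1, hp⟩

lemma exists_limsup_terminalValue_le (hζ'pos : 0 < ζ') (hmono' : MonotoneOn f' (Ico 0 ζ'))
    (hpt : ∀ c ∈ Ico (0 : ℝ) ζ', ContinuousWithinAt f' (Ico 0 ζ') c →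
      Tendsto (fun p => f p c) l (𝓝 (f' c)))
    (hunif : Tendsto
      (fun c : ℝ => limsup (fun p => terminalValue (ζ p) (f p) - (f p c : EReal)) l)
      (𝓝[<] ζ') (𝓝 0)) :
    ∀ ε : ℝ, 0 < ε → ∃ c ∈ Ico 0 ζ', limsup (fun p => terminalValue (ζ p) (f p)) l ≤ f' c + ε := by
  intro ε hε
  obtain ⟨c, ⟨hc, hcont⟩, hsmall⟩ :=
    ((hmono'.frequently_continuousWithinAt_nhdsLT hζ'pos).and_eventually
      (hunif.eventually_lt_const (EReal.coe_pos.2 hε))).exists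
  refine ⟨c, hc, ?_⟩
  calc limsup (fun p => terminalValue (ζ p) (f p)) l
      ≤ limsup (fun p => terminalValue (ζ p) (f p) - (f p c : EReal)) l + f' c :=
        EReal.limsup_le_limsup_sub_add (hpt c hc hcont)
    _ ≤ ε + f' c := by gcongr
    _ = f' c + ε := add_comm _ _

end KilledPaths

theorem terminal_values_of_killed_paths_converge_general
    (ζ : ℕ → ℝ) (ζ' : ℝ) (hζ'pos : 0 < ζ')
    (hζ : Tendsto ζ atTop (𝓝 ζ'))
    (f : ℕ → ℝ → ℝ) (f' : ℝ → ℝ)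
    (hmono' : MonotoneOn f' (Ico 0 ζ'))
    (hpt : ∀ c ∈ Ico (0 : ℝ) ζ', ContinuousWithinAt f' (Ico 0 ζ') c →
      Tendsto (fun p => f p c) atTop (𝓝 (f' c)))
    (hunif : Tendsto
      (fun c : ℝ => limsup
        (fun p => (⨆ x ∈ Ico (0 : ℝ) (ζ p), (f p x : EReal)) - (f p c : EReal))
        atTop)
      (𝓝[<] ζ') (𝓝 (0 : EReal))) :
    (⨆ x ∈ Ico (0 : ℝ) ζ', (f' x : EReal)) < ⊤ ∧
      Tendsto (fun p => ⨆ x ∈ Ico (0 : ℝ) (ζ p), (f p x : EReal)) atTop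
        (𝓝 (⨆ x ∈ Ico (0 : ℝ) ζ', (f' x : EReal))) := by
  change terminalValue ζ' f' < ⊤ ∧
    Tendsto (fun p => terminalValue (ζ p) (f p)) atTop (𝓝 (terminalValue ζ' f'))
  have hlow := terminalValue_le_liminf hζ hmono' hpt
  have hup := exists_limsup_terminalValue_le hζ'pos hmono' hpt hunif
  have hlimsup : limsup (fun p => terminalValue (ζ p) (f p)) atTop ≤ terminalValue ζ' f' :=
    EReal.le_of_forall_pos_le_add fun ε hε =>
      let ⟨c, hc, hle⟩ := hup ε hε
      hle.trans (add_le_add_left (le_terminalValue f' hc) _)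
  obtain ⟨c, -, hc⟩ := hup 1 one_pos
  exact ⟨(hlow.trans liminf_le_limsup).trans_lt
      (hc.trans_lt (EReal.add_lt_top (EReal.coe_ne_top _) (EReal.coe_ne_top _))),
    tendsto_of_le_liminf_of_limsup_le hlow hlimsup⟩

/-- **Convergence of terminal values of killed nondecreasing paths** (Statement 3).
Let `ζ p → ζ∞` in `(0,∞)` and let `f p` be nondecreasing on `[0, ζ p)`,
`f∞` nondecreasing on `[0, ζ∞)`.  Write `M p = sup_{[0, ζ p)} f p` (a priori in
`ℝ ∪ {+∞}`, i.e. `EReal`) and `M∞ = sup_{[0, ζ∞)} f∞`.  If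
(i) `f p c → f∞ c` at every continuity point `c ∈ [0, ζ∞)` of `f∞`, and
(ii) `lim_{c ↑ ζ∞} limsup_p (M p − f p c) = 0`,
then `M∞ < +∞` and `M p → M∞`. -/
theorem terminal_values_of_killed_paths_converge
    (ζ : ℕ → ℝ) (ζ' : ℝ) (hζpos : ∀ p, 0 < ζ p) (hζ'pos : 0 < ζ')
    (hζ : Tendsto ζ atTop (𝓝 ζ'))
    (f : ℕ → ℝ → ℝ) (f' : ℝ → ℝ)
    (hmono : ∀ p, MonotoneOn (f p) (Ico 0 (ζ p)))
    (hmono' : MonotoneOn f' (Ico 0 ζ'))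
    (hpt : ∀ c ∈ Ico (0 : ℝ) ζ', ContinuousWithinAt f' (Ico 0 ζ') c →
      Tendsto (fun p => f p c) atTop (𝓝 (f' c)))
    (hunif : Tendsto
      (fun c : ℝ => limsup
        (fun p => (⨆ x ∈ Ico (0 : ℝ) (ζ p), (f p x : EReal)) - (f p c : EReal))
        atTop)
      (𝓝[<] ζ') (𝓝 (0 : EReal))) :
    (⨆ x ∈ Ico (0 : ℝ) ζ', (f' x : EReal)) < ⊤ ∧
      Tendsto (fun p => ⨆ x ∈ Ico (0 : ℝ) (ζ p), (f p x : EReal)) atTop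
        (𝓝 (⨆ x ∈ Ico (0 : ℝ) ζ', (f' x : EReal))) :=
  terminal_values_of_killed_paths_converge_general ζ ζ' hζ'pos hζ f f' hmono' hpt hunif
end

section
/- Let S : ℕ → ℤ be a path with S(0) = 0 such that limsup_{n→∞} S(n) = +∞. Suppose m ∈ ℕ is not a weak record time of S, i.e., there exists i < m with S(i) > S(m) (equivalently, X(m) > 0). Let K = min{k ≥ 0 : 𝒵^m(k) ≥ X(m)}. Then for every j ≥ 0, T(T⁻¹(m) + j) = m + T^m(K + j): the weak ascending ladder epochs of S from index T⁻¹(m) on coincide with m plus the weak ascending ladder epochs of the shifted path S^m from index K on. -/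
/-- Running maximum `max_{0 ≤ i ≤ m} S i` of a path `S : ℕ → ℤ`. -/
def runMax (S : ℕ → ℤ) : ℕ → ℤ
  | 0 => S 0
  | m + 1 => max (runMax S m) (S (m + 1))

/-- `X m = max_{0 ≤ i ≤ m} S i − S m`, the depth of the valley straddling `m`. -/
def valleyDepth (S : ℕ → ℤ) (m : ℕ) : ℤ := runMax S m - S m

/-- `n` is a weak record time of `S` if `S n ≥ S i` for all `i < n`. -/
def IsWeakRecord (S : ℕ → ℤ) (n : ℕ) : Prop := ∀ i < n, S i ≤ S n

/-- Weak ascending ladder epochs: `T 0 = 0`,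
`T (k+1) = min {ℓ > T k : S ℓ ≥ S (T k)}`. -/
noncomputable def ladderT (S : ℕ → ℤ) : ℕ → ℕ
  | 0 => 0
  | k + 1 => sInf {ℓ : ℕ | ladderT S k < ℓ ∧ S (ladderT S k) ≤ S ℓ}

/-- Ladder heights `𝒵 k = S (T k)`. -/
noncomputable def ladderZ (S : ℕ → ℤ) (k : ℕ) : ℤ := S (ladderT S k)

/-- `T⁻¹ n = min {k : T k ≥ n}`. -/
noncomputable def ladderTinv (S : ℕ → ℤ) (n : ℕ) : ℕ := sInf {k : ℕ | n ≤ ladderT S k}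

/-- Shifted path `S^m j = S (m + j) − S m`. -/
def shiftPath (S : ℕ → ℤ) (m : ℕ) : ℕ → ℤ := fun j => S (m + j) - S m

-- auxiliary lemmas
section Aux
variable (S : ℕ → ℤ)

def UnbPath (S : ℕ → ℤ) : Prop := ∀ M : ℤ, ∀ N : ℕ, ∃ n, N ≤ n ∧ M ≤ S n

lemma ladderT_succ_def (k : ℕ) :
    ladderT S (k + 1) = sInf {ℓ : ℕ | ladderT S k < ℓ ∧ S (ladderT S k) ≤ S ℓ} := rfl

variable {S}

lemma ladder_set_nonempty (hS : UnbPath S) (k : ℕ) :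
    {ℓ : ℕ | ladderT S k < ℓ ∧ S (ladderT S k) ≤ S ℓ}.Nonempty := by
  obtain ⟨n, hn1, hn2⟩ := hS (S (ladderT S k)) (ladderT S k + 1)
  exact ⟨n, hn1, hn2⟩

lemma ladderT_succ_mem (hS : UnbPath S) (k : ℕ) :
    ladderT S k < ladderT S (k + 1) ∧ S (ladderT S k) ≤ S (ladderT S (k + 1)) := by
  rw [ladderT_succ_def]
  exact Nat.sInf_mem (ladder_set_nonempty hS k)

lemma ladderT_strictMono (hS : UnbPath S) : StrictMono (ladderT S) :=
  strictMono_nat_of_lt_succ fun k => (ladderT_succ_mem hS k).1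

lemma self_le_ladderT (hS : UnbPath S) (k : ℕ) : k ≤ ladderT S k :=
  (ladderT_strictMono hS).le_apply

lemma ladderT_isRecord (hS : UnbPath S) (k : ℕ) : IsWeakRecord S (ladderT S k) := by
  induction k with
  | zero => intro i hi; simp [ladderT] at hi
  | succ k ih =>
    intro i hi
    obtain ⟨hlt, hle⟩ := ladderT_succ_mem hS k
    rcases le_or_gt i (ladderT S k) with h | h
    · rcases eq_or_lt_of_le h with rfl | h'
      · exact hle
      · exact (ih i h').trans hle
    · have hnot : i ∉ {ℓ : ℕ | ladderT S k < ℓ ∧ S (ladderT S k) ≤ S ℓ} :=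
        Nat.notMem_of_lt_sInf (by rw [← ladderT_succ_def]; exact hi)
      simp only [Set.mem_setOf_eq, not_and, not_le] at hnot
      exact ((hnot h).le).trans hle

lemma exists_ladderT_eq (hS : UnbPath S) {n : ℕ} (hn : IsWeakRecord S n) :
    ∃ k, ladderT S k = n := by
  classical
  have hex : ∃ c, n < ladderT S c :=
    ⟨n + 1, lt_of_lt_of_le (Nat.lt_succ_self n) (self_le_ladderT hS (n + 1))⟩
  have hspec : n < ladderT S (Nat.find hex) := Nat.find_spec hex
  have hc0 : Nat.find hex ≠ 0 := by
    intro h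
    rw [h] at hspec
    simp [ladderT] at hspec
  obtain ⟨k, hck⟩ := Nat.exists_eq_succ_of_ne_zero hc0
  rw [hck] at hspec
  simp only [Nat.succ_eq_add_one] at hspec
  have hkle : ladderT S k ≤ n := by
    by_contra h
    have hlt : k < Nat.find hex := by omega
    exact Nat.find_min hex hlt (by omega)
  rcases eq_or_lt_of_le hkle with h | h
  · exact ⟨k, h⟩
  · exfalso
    have hmem : n ∈ {ℓ : ℕ | ladderT S k < ℓ ∧ S (ladderT S k) ≤ S ℓ} :=
      ⟨h, hn _ h⟩
    have := Nat.sInf_le hmem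
    rw [← ladderT_succ_def] at this
    omega

lemma le_runMax {i m : ℕ} (h : i ≤ m) : S i ≤ runMax S m := by
  induction m with
  | zero => interval_cases i; simp [runMax]
  | succ m ih =>
    rcases Nat.le_succ_iff.mp h with h' | h'
    · exact (ih h').trans (le_max_left _ _)
    · rw [h']; exact le_max_right _ _

lemma exists_runMax (m : ℕ) : ∃ i ≤ m, runMax S m = S i := by
  induction m with
  | zero => exact ⟨0, le_refl _, rfl⟩
  | succ m ih =>
    obtain ⟨i, hi, hEq⟩ := ih
    rcases max_cases (runMax S m) (S (m + 1)) with ⟨h1, _⟩ | ⟨h1, _⟩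
    · exact ⟨i, hi.trans (Nat.le_succ m), by rw [runMax, h1, hEq]⟩
    · exact ⟨m + 1, le_refl _, by rw [runMax, h1]⟩

lemma unb_shift (hS : UnbPath S) (m : ℕ) : UnbPath (shiftPath S m) := by
  intro M N
  obtain ⟨n, hn1, hn2⟩ := hS (M + S m) (m + N)
  refine ⟨n - m, by omega, ?_⟩
  have h : m + (n - m) = n := by omega
  simp only [shiftPath, h]
  linarith

end Aux


/-- **Discrete snake-like property, epoch identity** (Statement 5).
Assume `S 0 = 0`, `limsup S = +∞`, and `m` is not a weak record time of `S`.
Let `K = min {k : 𝒵^m k ≥ X m}`.  Then for all `j ≥ 0`,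
`T (T⁻¹ m + j) = m + T^m (K + j)`. -/
theorem ladder_epochs_after_valley
    (S : ℕ → ℤ) (hS0 : S 0 = 0)
    (hS : ∀ M : ℤ, ∀ N : ℕ, ∃ n, N ≤ n ∧ M ≤ S n)
    (m : ℕ) (hm : ¬ IsWeakRecord S m) :
    ∀ j : ℕ, ladderT S (ladderTinv S m + j)
      = m + ladderT (shiftPath S m)
          (sInf {k : ℕ | valleyDepth S m ≤ ladderZ (shiftPath S m) k} + j) := by
  have hU : UnbPath S := hS
  have hUm : UnbPath (shiftPath S m) := unb_shift hU m
  set S' := shiftPath S m with hS'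
  set D := valleyDepth S m with hD
  set K := sInf {k : ℕ | D ≤ ladderZ S' k} with hKdef
  set a := ladderTinv S m with ha
  -- D > 0
  have hDpos : 0 < D := by
    simp only [IsWeakRecord, not_forall] at hm
    obtain ⟨i, hi, hSi⟩ := hm
    push_neg at hSi
    have : S i ≤ runMax S m := le_runMax (le_of_lt hi)
    simp only [hD, valleyDepth]
    linarith
  -- K set nonempty and K ∈ set
  have hKne : {k : ℕ | D ≤ ladderZ S' k}.Nonempty := by
    obtain ⟨ℓ, -, hℓ⟩ := hUm D 0
    refine ⟨ℓ, ?_⟩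
    have hle : ℓ ≤ ladderT S' ℓ := self_le_ladderT hUm ℓ
    have h2 : S' ℓ ≤ S' (ladderT S' ℓ) := by
      rcases eq_or_lt_of_le hle with h | h
      · exact le_of_eq (congrArg S' h)
      · exact ladderT_isRecord hUm ℓ _ h
    show D ≤ ladderZ S' ℓ
    simp only [ladderZ]
    linarith
  have hK : D ≤ ladderZ S' K := Nat.sInf_mem hKne
  have hK0 : K ≠ 0 := by
    intro h
    rw [h] at hK
    simp only [ladderZ, ladderT] at hK
    simp only [hS', shiftPath, add_zero, sub_self] at hK
    omega
  have hTK0 : 0 < ladderT S' K := by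
    have := self_le_ladderT hUm K
    omega
  -- S' value fact: runMax S m ≤ S (m + ladderT S' K)
  have hrm : runMax S m ≤ S (m + ladderT S' K) := by
    have : D ≤ S (m + ladderT S' K) - S m := hK
    simp only [hD, valleyDepth] at this
    linarith
  -- n₀ := m + ladderT S' K is a weak record of S
  have hrec0 : IsWeakRecord S (m + ladderT S' K) := by
    intro i hi
    rcases le_or_gt i m with h | h
    · exact (le_runMax h).trans hrm
    · have hj : i - m < ladderT S' K := by omega
      have := ladderT_isRecord hUm K (i - m) hj
      have him : m + (i - m) = i := by omega
      simp only [hS', shiftPath, him] at this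
      linarith
  -- a properties
  have hane : {k : ℕ | m ≤ ladderT S k}.Nonempty := ⟨m, self_le_ladderT hU m⟩
  have ham : m ≤ ladderT S a := Nat.sInf_mem hane
  -- base case: ladderT S a = m + ladderT S' K
  have hbase : ladderT S a = m + ladderT S' K := by
    obtain ⟨k0, hk0⟩ := exists_ladderT_eq hU hrec0
    have hle1 : ladderT S a ≤ m + ladderT S' K := by
      have : a ≤ k0 := Nat.sInf_le (by simp only [Set.mem_setOf_eq, hk0]; omega)
      calc ladderT S a ≤ ladderT S k0 := (ladderT_strictMono hU).monotone this
        _ = m + ladderT S' K := hk0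
    rcases eq_or_lt_of_le hle1 with h | h
    · exact h
    · exfalso
      -- m ≤ ladderT S a < m + ladderT S' K, ladderT S a record of S, ≠ m
      have hne : ladderT S a ≠ m := by
        intro h'
        exact hm (h' ▸ ladderT_isRecord hU a)
      set j := ladderT S a - m with hj
      have hjpos : 0 < j := by omega
      have hjlt : j < ladderT S' K := by omega
      have hmj : m + j = ladderT S a := by omega
      have hreca := ladderT_isRecord hU a
      -- D ≤ S' j
      have hDj : D ≤ S' j := by
        obtain ⟨i0, hi0, hEq⟩ := exists_runMax (S := S) m
        have : S i0 ≤ S (ladderT S a) := hreca i0 (by omega)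
        simp only [hS', shiftPath, hmj, hD, valleyDepth]
        linarith
      -- j record of S'
      have hjrec : IsWeakRecord S' j := by
        intro i' hi'
        have : S (m + i') ≤ S (ladderT S a) := hreca (m + i') (by omega)
        simp only [hS', shiftPath, hmj]
        linarith
      obtain ⟨k', hk'⟩ := exists_ladderT_eq hUm hjrec
      have hk'mem : k' ∈ {k : ℕ | D ≤ ladderZ S' k} := by
        simp only [Set.mem_setOf_eq, ladderZ, hk']
        exact hDj
      have hKk' : K ≤ k' := Nat.sInf_le hk'mem
      have : ladderT S' K ≤ ladderT S' k' := (ladderT_strictMono hUm).monotone hKk'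
      omega
  -- induction
  intro j
  induction j with
  | zero => simpa using hbase
  | succ j ih =>
    have hstep : ∀ n t : ℕ, n = m + t →
        sInf {ℓ : ℕ | n < ℓ ∧ S n ≤ S ℓ}
          = m + sInf {ℓ : ℕ | t < ℓ ∧ S' t ≤ S' ℓ} := by
      intro n t hnt
      have hBne : {ℓ : ℕ | t < ℓ ∧ S' t ≤ S' ℓ}.Nonempty := by
        obtain ⟨ℓ, hℓ1, hℓ2⟩ := hUm (S' t) (t + 1)
        exact ⟨ℓ, hℓ1, hℓ2⟩
      have hAne : {ℓ : ℕ | n < ℓ ∧ S n ≤ S ℓ}.Nonempty := by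
        obtain ⟨ℓ, hℓ1, hℓ2⟩ := hU (S n) (n + 1)
        exact ⟨ℓ, hℓ1, hℓ2⟩
      obtain ⟨hb1, hb2⟩ := Nat.sInf_mem hBne
      obtain ⟨hc1, hc2⟩ := Nat.sInf_mem hAne
      set b := sInf {ℓ : ℕ | t < ℓ ∧ S' t ≤ S' ℓ} with hbdef
      set c := sInf {ℓ : ℕ | n < ℓ ∧ S n ≤ S ℓ} with hcdef
      have h1 : c ≤ m + b := by
        apply Nat.sInf_le
        constructor
        · omega
        · simp only [hS', shiftPath] at hb2
          rw [hnt]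
          linarith
      have h2 : m + b ≤ c := by
        have hmem : c - m ∈ {ℓ : ℕ | t < ℓ ∧ S' t ≤ S' ℓ} := by
          constructor
          · omega
          · have hcm : m + (c - m) = c := by omega
            simp only [hS', shiftPath, hcm, hnt]
            rw [hnt] at hc2
            linarith
        have := Nat.sInf_le hmem
        omega
      omega
    have h1 : a + (j + 1) = (a + j) + 1 := by omega
    have h2 : K + (j + 1) = (K + j) + 1 := by omega
    rw [h1, h2, ladderT_succ_def, ladderT_succ_def]
    rw [hstep (ladderT S (a + j)) (ladderT S' (K + j)) ih]
end

section
/- Let E, F, G be Polish spaces. For each p ∈ ℕ let X_p, Y_p, Z_p be random elements of E, F, G respectively (possibly defined on different probability spaces), let X be a random element of E, and let g : E → F and h : E → G be Borel measurable maps. If (X_p, Y_p) converges in distribution to (X, g(X)) and (X_p, Z_p) converges in distribution to (X, h(X)), then the triple (X_p, Y_p, Z_p) converges in distribution to (X, g(X), h(X)). -/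
/-!
The laws of the triples form a tight sequence: their pair marginals converge, and a convergent
sequence of laws on a Polish space is tight. By Prokhorov's theorem it is relatively compact, so it
suffices that every cluster point `ν` is the law of `(X, g X, h X)`. The pair marginals of `ν` are
the laws of `(X, g X)` and `(X, h X)`, which are carried by the graphs of `g` and `h`; hence
`y = g x` and `z = h x` hold `ν`-almost surely, and `ν` is the image of its first marginal, the
law of `X`, under `x ↦ (x, g x, h x)`.
-/

open MeasureTheory Filter Set
open scoped Topology BoundedContinuousFunction

theorem MapClusterPt.eq_of_tendsto {X α : Type*} [TopologicalSpace X] [T2Space X] {L : Filter α}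
    {u : α → X} {x y : X} (hx : MapClusterPt x L u) (hy : Tendsto u L (𝓝 y)) : x = y :=
  eq_of_nhds_neBot (hx.neBot.mono (inf_le_inf_left _ hy))

namespace MeasureTheory

section Tightness

variable {E : Type*} [TopologicalSpace E] [PolishSpace E] [MeasurableSpace E] [BorelSpace E]

lemma isTightMeasureSet_range_of_tendsto {μ : ℕ → ProbabilityMeasure E} {μ₀ : ProbabilityMeasure E}
    (h : Tendsto μ atTop (𝓝 μ₀)) : IsTightMeasureSet (range fun n ↦ (μ n : Measure E)) := by
  let := TopologicalSpace.upgradeIsCompletelyMetrizable E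
  have hK := h.isCompact_insert_range
  have hcomp : IsCompact (closure (range μ)) :=
    hK.of_isClosed_subset isClosed_closure (closure_minimal (subset_insert _ _) hK.isClosed)
  exact (isTightMeasureSet_of_isCompact_closure hcomp).subset
    (by rintro _ ⟨n, rfl⟩; exact ⟨μ n, mem_range_self n, rfl⟩)

lemma isTightMeasureSet_range_map_of_tendsto {E' : Type*} [TopologicalSpace E'] [T2Space E']
    [MeasurableSpace E'] [OpensMeasurableSpace E']
    {μ : ℕ → ProbabilityMeasure E} {μ₀ : ProbabilityMeasure E}
    (h : Tendsto μ atTop (𝓝 μ₀)) {f : E → E'} (hf : Continuous f) :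
    IsTightMeasureSet (range fun n ↦ (μ n : Measure E).map f) := by
  have := (isTightMeasureSet_range_of_tendsto h).map hf
  rwa [← range_comp] at this

end Tightness

section Graph

variable {α E F G : Type*} [MeasurableSpace α] [MeasurableSpace E] [MeasurableSpace F]
  [MeasurableSpace G]

lemma ae_snd_eq_of_map_eq_map_graph [MeasurableEq F] {ν : Measure α} {π : Measure E}
    {φ : α → E × F} (hφ : Measurable φ) {g : E → F} (hg : Measurable g)
    (h : ν.map φ = π.map fun x ↦ (x, g x)) : ∀ᵐ a ∂ν, (φ a).2 = g (φ a).1 := by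
  refine ae_of_ae_map (p := fun q ↦ q.2 = g q.1) hφ.aemeasurable ?_
  rw [h, ae_map_iff (by fun_prop : Measurable fun x ↦ (x, g x)).aemeasurable
    (measurableSet_eq_fun (f := Prod.snd) measurable_snd (by fun_prop))]
  exact ae_of_all _ fun _ ↦ rfl

lemma map_fst_map_graph (π : Measure E) {g : E → F} (hg : Measurable g) :
    (π.map fun x ↦ (x, g x)).map Prod.fst = π := by
  rw [Measure.map_map measurable_fst (by fun_prop)]
  exact Measure.map_id

theorem eq_map_graph_of_map_pairs_eq [MeasurableEq F] [MeasurableEq G]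
    {ν : Measure (E × F × G)} {π : Measure E} {g : E → F} {h : E → G}
    (hg : Measurable g) (hh : Measurable h)
    (h₁ : ν.map (fun q ↦ (q.1, q.2.1)) = π.map fun x ↦ (x, g x))
    (h₂ : ν.map (fun q ↦ (q.1, q.2.2)) = π.map fun x ↦ (x, h x)) :
    ν = π.map fun x ↦ (x, g x, h x) := by
  have hφ₁ : Measurable fun q : E × F × G ↦ (q.1, q.2.1) := by fun_prop
  have hφ₂ : Measurable fun q : E × F × G ↦ (q.1, q.2.2) := by fun_prop
  have hπ : ν.map Prod.fst = π := by
    rw [← map_fst_map_graph π hg, ← h₁, Measure.map_map measurable_fst hφ₁]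
    rfl
  have hgraph : id =ᵐ[ν] fun q ↦ (q.1, g q.1, h q.1) := by
    filter_upwards [ae_snd_eq_of_map_eq_map_graph hφ₁ hg h₁,
      ae_snd_eq_of_map_eq_map_graph hφ₂ hh h₂] with q hy hz
    exact Prod.ext rfl (Prod.ext hy hz)
  calc ν = ν.map id := Measure.map_id.symm
    _ = ν.map fun q ↦ (q.1, g q.1, h q.1) := Measure.map_congr hgraph
    _ = π.map fun x ↦ (x, g x, h x) := by
      rw [← hπ, Measure.map_map (by fun_prop) measurable_fst]
      rfl

end Graph

namespace ProbabilityMeasure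

lemma map_map {Ω S T : Type*} [MeasurableSpace Ω] [MeasurableSpace S]
    [MeasurableSpace T] (ν : ProbabilityMeasure Ω) {f : Ω → S} {g : S → T}
    (hg : Measurable g) (hf : Measurable f) :
    (ν.map hf.aemeasurable).map hg.aemeasurable = ν.map (hg.comp hf).aemeasurable :=
  toMeasure_injective (Measure.map_map hg hf)

lemma tendsto_map_iff_forall_integral_comp_tendsto {ι : Type*} {L : Filter ι}
    {Ω : ι → Type*} [∀ i, MeasurableSpace (Ω i)] {Ω' : Type*} [MeasurableSpace Ω']
    {S : Type*} [TopologicalSpace S] [MeasurableSpace S] [OpensMeasurableSpace S]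
    {μ : ∀ i, ProbabilityMeasure (Ω i)} {μ' : ProbabilityMeasure Ω'}
    {V : ∀ i, Ω i → S} {V' : Ω' → S} (hV : ∀ i, AEMeasurable (V i) (μ i))
    (hV' : AEMeasurable V' μ') :
    Tendsto (fun i ↦ (μ i).map (hV i)) L (𝓝 (μ'.map hV')) ↔
      ∀ f : S →ᵇ ℝ, Tendsto (fun i ↦ ∫ ω, f (V i ω) ∂(μ i)) L (𝓝 (∫ ω, f (V' ω) ∂μ')) := by
  simp only [tendsto_iff_forall_integral_tendsto, toMeasure_map]
  refine forall_congr' fun f ↦ ?_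
  rw [integral_map hV' f.continuous.aestronglyMeasurable]
  simp_rw [integral_map (hV _) f.continuous.aestronglyMeasurable]

variable {E F G : Type*}
  [TopologicalSpace E] [PolishSpace E] [MeasurableSpace E] [BorelSpace E]
  [TopologicalSpace F] [PolishSpace F] [MeasurableSpace F] [BorelSpace F]
  [TopologicalSpace G] [PolishSpace G] [MeasurableSpace G] [BorelSpace G]

lemma isTightMeasureSet_range_of_tendsto_map_pairs {ν : ℕ → ProbabilityMeasure (E × F × G)}
    {μ₁ : ProbabilityMeasure (E × F)} {μ₂ : ProbabilityMeasure (E × G)}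
    (h₁ : Tendsto (fun n ↦ (ν n).map (measurable_fst.prodMk measurable_snd.fst).aemeasurable)
      atTop (𝓝 μ₁))
    (h₂ : Tendsto (fun n ↦ (ν n).map (measurable_fst.prodMk measurable_snd.snd).aemeasurable)
      atTop (𝓝 μ₂)) :
    IsTightMeasureSet {(μ : Measure (E × F × G)) | μ ∈ range ν} := by
  refine .prodMk ?_ (.prodMk ?_ ?_)
  · refine (isTightMeasureSet_range_map_of_tendsto h₁ continuous_fst).subset ?_
    rintro _ ⟨_, ⟨_, ⟨n, rfl⟩, rfl⟩, rfl⟩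
    exact ⟨n, by simp (disch := fun_prop) only [Measure.fst, toMeasure_map, Measure.map_map]; rfl⟩
  · refine (isTightMeasureSet_range_map_of_tendsto h₁ continuous_snd).subset ?_
    rintro _ ⟨_, ⟨_, ⟨_, ⟨n, rfl⟩, rfl⟩, rfl⟩, rfl⟩
    exact ⟨n, by
      simp (disch := fun_prop) only [Measure.fst, Measure.snd, toMeasure_map, Measure.map_map]
      rfl⟩
  · refine (isTightMeasureSet_range_map_of_tendsto h₂ continuous_snd).subset ?_
    rintro _ ⟨_, ⟨_, ⟨_, ⟨n, rfl⟩, rfl⟩, rfl⟩, rfl⟩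
    exact ⟨n, by simp (disch := fun_prop) only [Measure.snd, toMeasure_map, Measure.map_map]; rfl⟩

theorem tendsto_map_graph_of_tendsto_map_pairs {ν : ℕ → ProbabilityMeasure (E × F × G)}
    {π : ProbabilityMeasure E} {g : E → F} {h : E → G} (hg : Measurable g) (hh : Measurable h)
    (h₁ : Tendsto (fun n ↦ (ν n).map (measurable_fst.prodMk measurable_snd.fst).aemeasurable)
      atTop (𝓝 (π.map (measurable_id'.prodMk hg).aemeasurable)))
    (h₂ : Tendsto (fun n ↦ (ν n).map (measurable_fst.prodMk measurable_snd.snd).aemeasurable)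
      atTop (𝓝 (π.map (measurable_id'.prodMk hh).aemeasurable))) :
    Tendsto ν atTop (𝓝 (π.map (measurable_id'.prodMk (hg.prodMk hh)).aemeasurable)) := by
  have hφ₁ : Continuous fun q : E × F × G ↦ (q.1, q.2.1) := by fun_prop
  have hφ₂ : Continuous fun q : E × F × G ↦ (q.1, q.2.2) := by fun_prop
  refine (isCompact_closure_of_isTightMeasureSet
      (isTightMeasureSet_range_of_tendsto_map_pairs h₁ h₂)).tendsto_nhds_of_unique_mapClusterPt
    (Eventually.of_forall fun n ↦ subset_closure (mem_range_self n))
    fun ν₀ _ hν₀ ↦ toMeasure_injective (eq_map_graph_of_map_pairs_eq hg hh ?_ ?_)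
  · exact congrArg toMeasure
      ((hν₀.tendsto_comp ((continuous_map hφ₁).tendsto ν₀)).eq_of_tendsto h₁)
  · exact congrArg toMeasure
      ((hν₀.tendsto_comp ((continuous_map hφ₂).tendsto ν₀)).eq_of_tendsto h₂)

end ProbabilityMeasure

end MeasureTheory

/-- **Joint convergence in distribution from pairwise convergence towards measurable
functions of a common limit** (Statement 10).
Let `E, F, G` be Polish spaces, `(X p, Y p, Z p)` random elements of `E × F × G`
defined on (possibly different) probability spaces `(Ω p, μ p)`, `X'` a random
element of `E` on `(Ω', μ')`, and `g : E → F`, `h : E → G` Borel measurable.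
If `(X p, Y p) ⇒ (X', g X')` and `(X p, Z p) ⇒ (X', h X')` in distribution, then
`(X p, Y p, Z p) ⇒ (X', g X', h X')` in distribution.  Convergence in
distribution is expressed via bounded continuous test functions. -/
theorem joint_convergence_of_pairwise
    {E F G : Type*}
    [TopologicalSpace E] [PolishSpace E] [MeasurableSpace E] [BorelSpace E]
    [TopologicalSpace F] [PolishSpace F] [MeasurableSpace F] [BorelSpace F]
    [TopologicalSpace G] [PolishSpace G] [MeasurableSpace G] [BorelSpace G]
    (Ω : ℕ → Type*) [∀ p, MeasurableSpace (Ω p)]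
    (μ : ∀ p, Measure (Ω p)) [∀ p, IsProbabilityMeasure (μ p)]
    {Ω' : Type*} [MeasurableSpace Ω'] (μ' : Measure Ω') [IsProbabilityMeasure μ']
    (X : ∀ p, Ω p → E) (Y : ∀ p, Ω p → F) (Z : ∀ p, Ω p → G) (X' : Ω' → E)
    (hX : ∀ p, Measurable (X p)) (hY : ∀ p, Measurable (Y p))
    (hZ : ∀ p, Measurable (Z p)) (hX' : Measurable X')
    (g : E → F) (h : E → G) (hg : Measurable g) (hh : Measurable h)
    (hXY : ∀ f : BoundedContinuousFunction (E × F) ℝ,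
      Tendsto (fun p => ∫ x, f (X p x, Y p x) ∂(μ p)) atTop
        (𝓝 (∫ x, f (X' x, g (X' x)) ∂μ')))
    (hXZ : ∀ f : BoundedContinuousFunction (E × G) ℝ,
      Tendsto (fun p => ∫ x, f (X p x, Z p x) ∂(μ p)) atTop
        (𝓝 (∫ x, f (X' x, h (X' x)) ∂μ'))) :
    ∀ f : BoundedContinuousFunction (E × F × G) ℝ,
      Tendsto (fun p => ∫ x, f (X p x, Y p x, Z p x) ∂(μ p)) atTop
        (𝓝 (∫ x, f (X' x, g (X' x), h (X' x)) ∂μ')) := by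
  let P : ∀ p, ProbabilityMeasure (Ω p) := fun p ↦ ⟨μ p, inferInstance⟩
  let P' : ProbabilityMeasure Ω' := ⟨μ', inferInstance⟩
  have hXYZ : ∀ p, Measurable fun ω ↦ (X p ω, Y p ω, Z p ω) := fun p ↦ by fun_prop
  have tXY := (ProbabilityMeasure.tendsto_map_iff_forall_integral_comp_tendsto (μ := P)
    (μ' := P') (fun p ↦ ((hX p).prodMk (hY p)).aemeasurable) (by fun_prop)).2 hXY
  have tXZ := (ProbabilityMeasure.tendsto_map_iff_forall_integral_comp_tendsto (μ := P)
    (μ' := P') (fun p ↦ ((hX p).prodMk (hZ p)).aemeasurable) (by fun_prop)).2 hXZ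
  have tXYZ := ProbabilityMeasure.tendsto_map_graph_of_tendsto_map_pairs
    (ν := fun p ↦ (P p).map (hXYZ p).aemeasurable) (π := P'.map hX'.aemeasurable) hg hh
    (by simpa (disch := fun_prop) only [ProbabilityMeasure.map_map] using tXY)
    (by simpa (disch := fun_prop) only [ProbabilityMeasure.map_map] using tXZ)
  simp (disch := fun_prop) only [ProbabilityMeasure.map_map] at tXYZ
  exact (ProbabilityMeasure.tendsto_map_iff_forall_integral_comp_tendsto _ _).1 tXYZ
end

section
/- Let ξ be a random variable with values in the positive integers, V a nonnegative real random variable, (X_i)_{i≥1} a sequence of i.i.d. real random variables, and U a positive-integer random variable, all defined on a common probability space. Assume: (V, (X_i)_{i≥1}) is independent of the pair (ξ, U); V is independent of (X_i)_{i≥1}; and, conditionally on ξ = n, U is uniformly distributed on {1, …, n}. Define W = V · X^{(U:ξ)}, where X^{(k:n)} denotes the k-th order statistic of (X_1, …, X_n). Then W is independent of ξ, and W has the same distribution as V · X_1. -/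
/-!
On the event `{ξ = n, U = k}` we have `W = V · X^{(k:n)}`. Since `(V, X)` is independent of
`(ξ, U)` and `U` is uniform on `{1, …, n}` given `ξ = n`,
`P(W ∈ B, ξ = n) = P(ξ = n) · (1/n) ∑ₖ P(V · X^{(k:n)} ∈ B)`.
Sorting only permutes `X_1, …, X_n`, so `∑ₖ 1_B(V · X^{(k:n)}) = ∑ᵢ 1_B(V · X_i)`, and each
`V · X_i` has the law of `V · X_1` because `V` is independent of `X_i` and `X_i ~ X_1`.
Hence `P(W ∈ B, ξ = n) = P(ξ = n) · P(V · X_1 ∈ B)` for every `n`, which gives both the law of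
`W` and its independence of `ξ`.
-/

open MeasureTheory ProbabilityTheory
open scoped ENNReal

/-- The `k`-th order statistic (0-based) of the first `m` values of `v : ℕ → ℝ`:
the entry of rank `k` in the nondecreasing rearrangement of `(v 0, …, v (m-1))`
(junk value `0` if `k ≥ m`). -/
noncomputable def orderStat (m : ℕ) (v : ℕ → ℝ) (k : ℕ) : ℝ :=
  if h : k < m then
    ((fun i : Fin m => v i) ∘ Tuple.sort (fun i : Fin m => v i)) ⟨k, h⟩
  else 0

section OrderStatistics

open Finset

theorem orderStat_of_lt {m k : ℕ} (hk : k < m) (v : ℕ → ℝ) :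
    orderStat m v k = v (Tuple.sort (fun i : Fin m => v i) ⟨k, hk⟩) :=
  dif_pos hk

theorem orderStat_le_iff {m k : ℕ} (hk : k < m) (v : ℕ → ℝ) (t : ℝ) :
    orderStat m v k ≤ t ↔ k < #{i : Fin m | v i ≤ t} := by
  set f : Fin m → ℝ := fun i => v i
  have hperm : #{i | (f ∘ Tuple.sort f) i ≤ t} = #{i | f i ≤ t} := by
    simp only [card_filter]
    exact Equiv.sum_comp (Tuple.sort f) fun i => if f i ≤ t then 1 else 0
  rw [orderStat_of_lt hk, ← hperm]
  exact (Tuple.lt_card_le_iff_apply_le_of_monotone (Tuple.monotone_sort f)).symm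

theorem measurable_orderStat (m k : ℕ) : Measurable fun v : ℕ → ℝ => orderStat m v k := by
  by_cases hk : k < m
  · refine measurable_of_Iic fun t => ?_
    have hcount : Measurable fun v : ℕ → ℝ => #{i : Fin m | v i ≤ t} := by
      simp only [card_filter]
      refine Finset.measurable_sum _ fun i _ => Measurable.ite ?_ measurable_const measurable_const
      exact measurableSet_le (measurable_pi_apply _) measurable_const
    have hpre : (fun v : ℕ → ℝ => orderStat m v k) ⁻¹' Set.Iic t
        = (fun v : ℕ → ℝ => #{i : Fin m | v i ≤ t}) ⁻¹' Set.Ioi k := by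
      ext v
      exact orderStat_le_iff hk v t
    rw [hpre]
    exact hcount measurableSet_Ioi
  · simp only [orderStat, dif_neg hk, measurable_const]

theorem sum_range_orderStat {M : Type*} [AddCommMonoid M] (n : ℕ) (v : ℕ → ℝ) (g : ℝ → M) :
    ∑ j ∈ range n, g (orderStat n v j) = ∑ i ∈ range n, g (v i) := by
  rw [← Fin.sum_univ_eq_sum_range (fun j => g (orderStat n v j)),
    ← Fin.sum_univ_eq_sum_range (fun i => g (v i))]
  simp only [orderStat_of_lt (Fin.is_lt _)]
  exact Equiv.sum_comp (Tuple.sort fun i : Fin n => v i) fun i => g (v i)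

end OrderStatistics

theorem Measurable.orderStat {Ω : Type*} [MeasurableSpace Ω] {m k : Ω → ℕ} {v : Ω → ℕ → ℝ}
    (hm : Measurable m) (hv : Measurable v) (hk : Measurable k) :
    Measurable fun x => orderStat (m x) (v x) (k x) := by
  have : Measurable fun p : (ℕ → ℝ) × (ℕ × ℕ) => _root_.orderStat p.2.1 p.1 p.2.2 :=
    measurable_from_prod_countable_left fun q => measurable_orderStat q.1 q.2
  exact this.comp (hv.prodMk (hm.prodMk hk))

section Fibers

variable {Ω ι : Type*} [MeasurableSpace Ω] {μ : Measure Ω}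
  [MeasurableSpace ι] [Countable ι] [MeasurableSingletonClass ι] {ξ : Ω → ι}

theorem tsum_measure_preimage_singleton_inter (hξ : Measurable ξ) (t : Set ι) (S : Set Ω) :
    ∑' n : t, μ (ξ ⁻¹' {↑n} ∩ S) = μ (ξ ⁻¹' t ∩ S) := by
  have := tsum_measure_preimage_singleton (μ := μ.restrict S) t.to_countable
    fun n _ => hξ (measurableSet_singleton n)
  simpa only [Measure.restrict_apply (hξ (measurableSet_singleton _)),
    Measure.restrict_apply (hξ t.to_countable.measurableSet)] using this

theorem tsum_measure_preimage_singleton_inter_eq (hξ : Measurable ξ) (S : Set Ω) :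
    ∑' n, μ (ξ ⁻¹' {n} ∩ S) = μ S := by
  rw [← tsum_univ, tsum_measure_preimage_singleton_inter hξ, Set.preimage_univ, Set.univ_inter]

theorem indepFun_and_map_eq_of_measure_inter_fiber [IsProbabilityMeasure μ] {β : Type*}
    [MeasurableSpace β] {W : Ω → β} {ν : Measure β} (hW : Measurable W) (hξ : Measurable ξ)
    (h : ∀ B, MeasurableSet B → ∀ n, μ (ξ ⁻¹' {n} ∩ W ⁻¹' B) = μ (ξ ⁻¹' {n}) * ν B) :
    IndepFun W ξ μ ∧ μ.map W = ν := by
  have key : ∀ B, MeasurableSet B → ∀ t, μ (ξ ⁻¹' t ∩ W ⁻¹' B) = μ (ξ ⁻¹' t) * ν B := by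
    intro B hB t
    rw [← tsum_measure_preimage_singleton_inter hξ, ← tsum_measure_preimage_singleton
      t.to_countable fun n _ => hξ (measurableSet_singleton n), ← ENNReal.tsum_mul_right]
    exact tsum_congr fun n => h B hB n
  have hmap : μ.map W = ν := Measure.ext fun B hB => by
    simpa [Measure.map_apply hW hB] using key B hB Set.univ
  refine ⟨indepFun_iff_measure_inter_preimage_eq_mul.2 fun B t hB _ => ?_, hmap⟩
  rw [Set.inter_comm, key B hB t, ← hmap, Measure.map_apply hW hB, mul_comm]

end Fibers

theorem IdentDistrib.mul_of_indepFun {Ω M : Type*} [MeasurableSpace Ω] {μ : Measure Ω}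
    [IsFiniteMeasure μ] [Mul M] [MeasurableSpace M] [MeasurableMul₂ M] {V Y Y' : Ω → M}
    (hV : AEMeasurable V μ) (hY : IdentDistrib Y Y' μ μ) (hVY : IndepFun V Y μ)
    (hVY' : IndepFun V Y' μ) :
    IdentDistrib (fun x => V x * Y x) (fun x => V x * Y' x) μ μ :=
  ((IdentDistrib.refl hV).prodMk hY hVY hVY').comp measurable_mul

theorem sum_measure_mul_orderStat_mem_eq_sum {Ω : Type*} [MeasurableSpace Ω] (μ : Measure Ω)
    {V : Ω → ℝ} {X : ℕ → Ω → ℝ} (hV : Measurable V) (hX : ∀ i, Measurable (X i))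
    {B : Set ℝ} (hB : MeasurableSet B) (n : ℕ) :
    ∑ j ∈ Finset.range n, μ {x | V x * orderStat n (fun i => X i x) j ∈ B}
      = ∑ i ∈ Finset.range n, μ {x | V x * X i x ∈ B} := by
  have hind : ∀ f : Ω → ℝ, Measurable f → μ {x | f x ∈ B} = ∫⁻ x, B.indicator 1 (f x) ∂μ :=
    fun f hf => (lintegral_indicator_one (hf hB)).symm
  have hXpi : Measurable fun x i => X i x := measurable_pi_lambda _ hX
  have hos : ∀ j, Measurable fun x => V x * orderStat n (fun i => X i x) j := fun j =>
    hV.mul ((measurable_orderStat n j).comp hXpi)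
  have hVX : ∀ i, Measurable fun x => V x * X i x := fun i => hV.mul (hX i)
  have hone : Measurable (B.indicator (1 : ℝ → ℝ≥0∞)) := measurable_one.indicator hB
  rw [Finset.sum_congr rfl fun j _ => hind _ (hos j),
    Finset.sum_congr rfl fun i _ => hind _ (hVX i),
    ← lintegral_finsetSum, ← lintegral_finsetSum]
  · exact lintegral_congr fun x =>
      sum_range_orderStat n (fun i => X i x) fun r => B.indicator 1 (V x * r)
  · exact fun i _ => hone.comp (hVX i)
  · exact fun j _ => hone.comp (hos j)

section BellmanHarris

open Finset

variable {Ω : Type*} [MeasurableSpace Ω] {μ : Measure Ω} {ξ U : Ω → ℕ}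

theorem measure_rank_inter_size_eq [IsFiniteMeasure μ] (hU : Measurable U)
    (hUcond : ∀ n k : ℕ, 1 ≤ k → k ≤ n →
      μ ({x | U x = k} ∩ {x | ξ x = n}) = μ {x | ξ x = n} / n)
    {n : ℕ} (hn : 1 ≤ n) (k : ℕ) :
    μ ({x | U x = k} ∩ {x | ξ x = n}) = if k ∈ Icc 1 n then μ {x | ξ x = n} / n else 0 := by
  split_ifs with hk
  · exact hUcond n k (mem_Icc.1 hk).1 (mem_Icc.1 hk).2
  set f : ℕ → ℝ≥0∞ := fun k => μ ({x | U x = k} ∩ {x | ξ x = n})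
  have htotal : ∑' k, f k = μ {x | ξ x = n} := tsum_measure_preimage_singleton_inter_eq hU _
  -- the uniform masses on `{1, …, n}` already exhaust `μ {ξ = n}`
  have huniform : ∑ k ∈ Icc 1 n, f k = μ {x | ξ x = n} := by
    rw [sum_congr rfl fun k hk => hUcond n k (mem_Icc.1 hk).1 (mem_Icc.1 hk).2, sum_const,
      Nat.card_Icc, add_tsub_cancel_right, nsmul_eq_mul,
      ENNReal.mul_div_cancel (by exact_mod_cast (by omega : n ≠ 0)) (ENNReal.natCast_ne_top n)]
  have hle : f k + μ {x | ξ x = n} ≤ 0 + μ {x | ξ x = n} :=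
    calc f k + μ {x | ξ x = n} = ∑ k ∈ insert k (Icc 1 n), f k := by rw [sum_insert hk, huniform]
      _ ≤ ∑' k, f k := ENNReal.sum_le_tsum _
      _ = 0 + μ {x | ξ x = n} := by rw [htotal, zero_add]
  exact nonpos_iff_eq_zero.1 (ENNReal.le_of_add_le_add_right (measure_ne_top _ _) hle)

theorem sum_measure_mul_orderStat_mem_eq_mul [IsFiniteMeasure μ] {V : Ω → ℝ}
    {X : ℕ → Ω → ℝ} (hV : Measurable V) (hX : ∀ i, Measurable (X i))
    (hident : ∀ i, Measure.map (X i) μ = Measure.map (X 0) μ)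
    (hindepVX : ∀ i, IndepFun V (X i) μ) {B : Set ℝ} (hB : MeasurableSet B) (n : ℕ) :
    ∑ j ∈ range n, μ {x | V x * orderStat n (fun i => X i x) j ∈ B}
      = n * μ {x | V x * X 0 x ∈ B} := by
  have hlaw : ∀ i, μ {x | V x * X i x ∈ B} = μ {x | V x * X 0 x ∈ B} := fun i =>
    (IdentDistrib.mul_of_indepFun hV.aemeasurable ⟨(hX i).aemeasurable, (hX 0).aemeasurable,
      hident i⟩ (hindepVX i) (hindepVX 0)).measure_mem_eq hB
  simp only [sum_measure_mul_orderStat_mem_eq_sum μ hV hX hB n, hlaw, sum_const, card_range,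
    nsmul_eq_mul]

theorem measure_inter_scaled_orderStat_mem_eq_mul [IsFiniteMeasure μ] {V : Ω → ℝ}
    {X : ℕ → Ω → ℝ} (hU : Measurable U) (hV : Measurable V) (hX : ∀ i, Measurable (X i))
    (hident : ∀ i, Measure.map (X i) μ = Measure.map (X 0) μ)
    (hindepVX : ∀ i, IndepFun V (X i) μ)
    (hindep : IndepFun (fun x => (V x, fun i => X i x)) (fun x => (ξ x, U x)) μ)
    (hUcond : ∀ n k : ℕ, 1 ≤ k → k ≤ n →
      μ ({x | U x = k} ∩ {x | ξ x = n}) = μ {x | ξ x = n} / n)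
    {n : ℕ} (hn : 1 ≤ n) {B : Set ℝ} (hB : MeasurableSet B) :
    μ ({x | ξ x = n} ∩ {x | V x * orderStat (ξ x) (fun i => X i x) (U x - 1) ∈ B})
      = μ {x | ξ x = n} * μ {x | V x * X 0 x ∈ B} := by
  set Y : ℕ → Set Ω := fun j => {x | V x * orderStat n (fun i => X i x) j ∈ B}
  have hY_indep : ∀ j k, μ (Y j ∩ ({x | U x = k} ∩ {x | ξ x = n}))
      = μ (Y j) * μ ({x | U x = k} ∩ {x | ξ x = n}) := by
    intro j k
    have := indepFun_iff_measure_inter_preimage_eq_mul.1 hindep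
      {p | p.1 * orderStat n p.2 j ∈ B} {(n, k)}
      ((measurable_fst.mul ((measurable_orderStat n j).comp measurable_snd)) hB)
      (measurableSet_singleton _)
    convert this using 3 <;> ext x <;> simp [Y, and_comm]
  have hY_sum : ∑ j ∈ range n, μ (Y j) = n * μ {x | V x * X 0 x ∈ B} :=
    sum_measure_mul_orderStat_mem_eq_mul hV hX hident hindepVX hB n
  calc μ ({x | ξ x = n} ∩ {x | V x * orderStat (ξ x) (fun i => X i x) (U x - 1) ∈ B})
      = ∑' k, μ ({x | U x = k} ∩ ({x | ξ x = n} ∩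
          {x | V x * orderStat (ξ x) (fun i => X i x) (U x - 1) ∈ B})) :=
        (tsum_measure_preimage_singleton_inter_eq hU _).symm
    _ = ∑' k, μ (Y (k - 1) ∩ ({x | U x = k} ∩ {x | ξ x = n})) := by
        refine tsum_congr fun k => congrArg μ (Set.ext fun x => ?_)
        simp only [Y, Set.mem_inter_iff, Set.mem_ofPred_eq]
        grind
    _ = ∑' k, μ (Y (k - 1)) * if k ∈ Icc 1 n then μ {x | ξ x = n} / n else 0 := by
        simp only [hY_indep, measure_rank_inter_size_eq hU hUcond hn]
    _ = ∑ k ∈ Icc 1 n, μ (Y (k - 1)) * (μ {x | ξ x = n} / n) := by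
        rw [tsum_eq_sum (s := Icc 1 n) fun k hk => by rw [if_neg hk, mul_zero]]
        exact sum_congr rfl fun k hk => by rw [if_pos hk]
    _ = (∑ j ∈ range n, μ (Y j)) * (μ {x | ξ x = n} / n) := by
        rw [← sum_mul, range_eq_Ico, ← Ico_add_one_right_eq_Icc, ← zero_add 1, ← sum_Ico_add']
        simp
    _ = μ {x | ξ x = n} * μ {x | V x * X 0 x ∈ B} := by
        rw [hY_sum, mul_comm (n : ℝ≥0∞), mul_assoc, ENNReal.mul_div_cancel
          (by exact_mod_cast (by omega : n ≠ 0)) (ENNReal.natCast_ne_top n), mul_comm]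

end BellmanHarris

theorem scaled_uniform_order_statistic_indep_of_size_general
    {Ω : Type*} [MeasurableSpace Ω] (μ : Measure Ω) [IsProbabilityMeasure μ]
    (ξ U : Ω → ℕ) (V : Ω → ℝ) (X : ℕ → Ω → ℝ)
    (hξmeas : Measurable ξ) (hUmeas : Measurable U) (hVmeas : Measurable V)
    (hXmeas : ∀ i, Measurable (X i))
    (hξpos : ∀ x, 1 ≤ ξ x)
    (hident : ∀ i, Measure.map (X i) μ = Measure.map (X 0) μ)
    (hindep₁ : IndepFun (fun x => (V x, fun i => X i x))
      (fun x => (ξ x, U x)) μ)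
    (hindep₂ : IndepFun V (fun x => fun i => X i x) μ)
    (hUcond : ∀ n k : ℕ, 1 ≤ k → k ≤ n →
      μ ({x | U x = k} ∩ {x | ξ x = n}) = μ {x | ξ x = n} / n) :
    IndepFun (fun x => V x * orderStat (ξ x) (fun i => X i x) (U x - 1)) ξ μ ∧
      Measure.map (fun x => V x * orderStat (ξ x) (fun i => X i x) (U x - 1)) μ
        = Measure.map (fun x => V x * X 0 x) μ := by
  have hW : Measurable fun x => V x * orderStat (ξ x) (fun i => X i x) (U x - 1) :=
    hVmeas.mul (hξmeas.orderStat (measurable_pi_lambda _ hXmeas) (hUmeas.sub_const 1))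
  refine indepFun_and_map_eq_of_measure_inter_fiber hW hξmeas fun B hB n => ?_
  rw [Measure.map_apply (f := fun x => V x * X 0 x) (hVmeas.mul (hXmeas 0)) hB]
  rcases Nat.eq_zero_or_pos n with rfl | hn
  · have hempty : ξ ⁻¹' {0} = ∅ :=
      Set.eq_empty_of_forall_notMem fun x hx => by
        rw [Set.mem_preimage, Set.mem_singleton_iff] at hx
        exact absurd (hξpos x) (by omega)
    simp [hempty]
  · exact measure_inter_scaled_orderStat_mem_eq_mul hUmeas hVmeas hXmeas hident
      (fun i => hindep₂.comp measurable_id (measurable_pi_apply i)) hindep₁ hUcond hn hB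

/-- **The chronological contribution in the extended Bellman–Harris model**
(Statement 12).  Let `ξ ≥ 1` be integer valued, `V ≥ 0` real, `(X i)` i.i.d. real
random variables and `U` integer valued, with `(V, (X i))` independent of `(ξ, U)`,
`V` independent of `(X i)`, and `U` uniform on `{1, …, n}` conditionally on
`ξ = n`.  Then `W = V · X^{(U:ξ)}` (the `U`-th order statistic of the first `ξ`
variables, scaled by `V`) is independent of `ξ` and distributed as `V · X 0`. -/
theorem scaled_uniform_order_statistic_indep_of_size
    {Ω : Type*} [MeasurableSpace Ω] (μ : Measure Ω) [IsProbabilityMeasure μ]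
    (ξ U : Ω → ℕ) (V : Ω → ℝ) (X : ℕ → Ω → ℝ)
    (hξmeas : Measurable ξ) (hUmeas : Measurable U) (hVmeas : Measurable V)
    (hXmeas : ∀ i, Measurable (X i))
    (hξpos : ∀ x, 1 ≤ ξ x) (hVnonneg : ∀ x, 0 ≤ V x)
    (hiid : iIndepFun X μ)
    (hident : ∀ i, Measure.map (X i) μ = Measure.map (X 0) μ)
    (hindep₁ : IndepFun (fun x => (V x, fun i => X i x))
      (fun x => (ξ x, U x)) μ)
    (hindep₂ : IndepFun V (fun x => fun i => X i x) μ)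
    (hUcond : ∀ n k : ℕ, 1 ≤ k → k ≤ n →
      μ ({x | U x = k} ∩ {x | ξ x = n}) = μ {x | ξ x = n} / n) :
    IndepFun (fun x => V x * orderStat (ξ x) (fun i => X i x) (U x - 1)) ξ μ ∧
      Measure.map (fun x => V x * orderStat (ξ x) (fun i => X i x) (U x - 1)) μ
        = Measure.map (fun x => V x * X 0 x) μ :=
  scaled_uniform_order_statistic_indep_of_size_general μ ξ U V X hξmeas hUmeas hVmeas hXmeas hξpos
    hident hindep₁ hindep₂ hUcond
end
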